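/- arXiv:2407.04193 — 5 statements merged into one kernel-verified Lean document; each statement's English description precedes it below -/
import Mathlib

section
/- For every odd integer k ≥ 3, we have g(k, 3·2^{k-1}) = 3·(2^k − 1) and g(k, 3·2^{k-1} + 2) = 3·2^k + k − 2, where g(m, 2d) = Σ_{i=0}^{m-1} ⌈d/2^{i-1}⌉ with ⌈d/2^{-1}⌉ = 2d. In particular g(k, 3·2^{k-1}+2) > 3·2^k for k ≥ 3, so an additive quaternary code of length 2^k − 1, dimension k/2, and minimum distance 3·2^{k-2} meets the additive Griesmer bound with equality and no code of the same length and dimension with distance 3·2^{k-2}+1 exists. -/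
/-- The additive Griesmer sum: `G m d` represents g(m, 2d) = Σ_{i=0}^{m-1} ⌈d/2^{i-1}⌉,
with the `i = 0` term equal to `2d`. -/
def G (m d : ℕ) : ℕ := 2 * d + ∑ i ∈ Finset.Ico 1 m, (d + 2 ^ (i - 1) - 1) / 2 ^ (i - 1)

lemma geom2 (n : ℕ) : ∑ j ∈ Finset.range n, 2 ^ j = 2 ^ n - 1 := by
  induction n with
  | zero => simp
  | succ n ih =>
    rw [Finset.sum_range_succ, ih]
    have : 1 ≤ 2 ^ n := Nat.one_le_two_pow
    have : 2 ^ (n + 1) = 2 * 2 ^ n := by ring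
    omega

lemma term1 (n j : ℕ) (hj : j < n) :
    (3 * 2 ^ (n - 1) + 2 ^ j - 1) / 2 ^ j = 3 * 2 ^ (n - 1 - j) := by
  have h : 3 * 2 ^ (n - 1) = 3 * 2 ^ (n - 1 - j) * 2 ^ j := by
    rw [mul_assoc, ← pow_add]; congr 2; omega
  have h1 : 1 ≤ 2 ^ j := Nat.one_le_two_pow
  have h2 : 3 * 2 ^ (n - 1) + 2 ^ j - 1 = (2 ^ j - 1) + 3 * 2 ^ (n - 1 - j) * 2 ^ j := by
    omega
  rw [h2, Nat.add_mul_div_right _ _ (by positivity), Nat.div_eq_of_lt (by omega)]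
  omega

lemma term2 (n j : ℕ) (hj : j < n) :
    (3 * 2 ^ (n - 1) + 1 + 2 ^ j - 1) / 2 ^ j = 3 * 2 ^ (n - 1 - j) + 1 := by
  have h : 3 * 2 ^ (n - 1) = 3 * 2 ^ (n - 1 - j) * 2 ^ j := by
    rw [mul_assoc, ← pow_add]; congr 2; omega
  have h1 : 1 ≤ 2 ^ j := Nat.one_le_two_pow
  have h2 : 3 * 2 ^ (n - 1) + 1 + 2 ^ j - 1 = (3 * 2 ^ (n - 1 - j) + 1) * 2 ^ j := by
    rw [add_mul, one_mul]; omega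
  rw [h2, Nat.mul_div_cancel _ (by positivity)]

lemma sumrefl (n : ℕ) : ∑ j ∈ Finset.range n, 3 * 2 ^ (n - 1 - j) = 3 * (2 ^ n - 1) := by
  rw [Finset.sum_range_reflect (fun j => 3 * 2 ^ j) n, ← Finset.mul_sum, geom2]

theorem stmt1 (k : ℕ) (hk : 3 ≤ k) (hodd : Odd k) :
    G k (3 * 2 ^ (k - 2)) = 3 * (2 ^ k - 1) ∧
    G k (3 * 2 ^ (k - 2) + 1) = 3 * 2 ^ k + k - 2 ∧
    3 * 2 ^ k < G k (3 * 2 ^ (k - 2) + 1) := by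
  set n := k - 1 with hn
  have hkn : k - 2 = n - 1 := by omega
  have hP : 2 ^ k = 4 * 2 ^ (n - 1) := by
    rw [show k = (n-1) + 2 by omega, pow_add]; ring
  have hs1 : G k (3 * 2 ^ (k - 2)) = 2 * (3 * 2 ^ (n - 1)) + 3 * (2 ^ n - 1) := by
    rw [G, hkn, Finset.sum_Ico_eq_sum_range]
    congr 1
    rw [show k - 1 = n by rfl]
    rw [← sumrefl n]
    apply Finset.sum_congr rfl
    intro j hj
    simp only [Finset.mem_range] at hj
    simpa using term1 n j hj
  have hs2 : G k (3 * 2 ^ (k - 2) + 1) = 2 * (3 * 2 ^ (n - 1) + 1) + (3 * (2 ^ n - 1) + n) := by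
    rw [G, hkn, Finset.sum_Ico_eq_sum_range]
    congr 1
    rw [show k - 1 = n by rfl]
    have : ∑ j ∈ Finset.range n, (3 * 2 ^ (n - 1) + 1 + 2 ^ (1 + j - 1) - 1) / 2 ^ (1 + j - 1)
        = ∑ j ∈ Finset.range n, (3 * 2 ^ (n - 1 - j) + 1) := by
      apply Finset.sum_congr rfl
      intro j hj
      simp only [Finset.mem_range] at hj
      simpa using term2 n j hj
    rw [this, Finset.sum_add_distrib, sumrefl]
    simp
  have hpow : 2 * 2 ^ (n - 1) = 2 ^ n := by
    rw [← pow_succ']; congr 1; omega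
  have h1 : 1 ≤ 2 ^ (n - 1) := Nat.one_le_two_pow
  refine ⟨by rw [hs1]; omega, by rw [hs2]; omega, by rw [hs2]; omega⟩
end

section
/- Suppose C_a is a quaternary additive code of length n (an additive subgroup of F_4^n) that contains two F_2-subcodes C_{s1} and C_{s2} with C_{s1} ∩ C_{s2} = {0} and C_a = C_{s1} + C_{s2}, where every nonzero codeword of C_{s1} has weight ≥ d_2 and every nonzero codeword of C_{s2} + (C_{s1} arbitrary) has weight ≥ d_1, and let C_{au} ⊆ F_4^l be an additive code, F_2-isomorphic to C_{s2} via an isomorphism φ, all of whose nonzero codewords have weight ≥ δ. Then the set {(c_1 + c_2, φ(c_2)) : c_1 ∈ C_{s1}, c_2 ∈ C_{s2}} ⊆ F_4^{n+l} is an additive code of length n+l, with |C_{s1}|·|C_{s2}| elements, whose minimum nonzero weight is at least min{δ + d_1, d_2}. -/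
/-!
The code is the image of the additive map `(c₁, c₂) ↦ (c₁ + c₂, φ c₂)` on `C_{s1} × C_{s2}`, so it
is additive, and injectivity of `φ` makes the map injective, which gives its size. For the weight
of a nonzero codeword: if `c₂ = 0` the codeword is `(c₁, 0)` with `c₁ ≠ 0`, of weight at least
`d₂`; otherwise its two halves contribute at least `d₁` and `δ` respectively.
-/

/-- Hamming weight of a vector. -/
def wt {ι F : Type*} [Fintype ι] [Zero F] [DecidableEq F] (v : ι → F) : ℕ :=
  (Finset.univ.filter fun i => v i ≠ 0).card

@[simp]
lemma wt_zero {ι F : Type*} [Fintype ι] [Zero F] [DecidableEq F] : wt (0 : ι → F) = 0 := by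
  simp [wt]

namespace ConstructionX

variable {M N : Type*} [AddCommGroup M] [AddCommGroup N]
  (A B : AddSubgroup M) (φ : B →+ N)

def encode : A × B →+ M × N :=
  (A.subtype.comp (AddMonoidHom.fst A B) + B.subtype.comp (AddMonoidHom.snd A B)).prod
    (φ.comp (AddMonoidHom.snd A B))

@[simp]
lemma encode_apply (p : A × B) : encode A B φ p = ((p.1 : M) + p.2, φ p.2) := rfl

def code : AddSubgroup (M × N) := (encode A B φ).range

lemma coe_code : (code A B φ : Set (M × N)) = {x | ∃ a ∈ A, ∃ b : B, x = (a + b, φ b)} := by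
  ext x
  constructor
  · rintro ⟨⟨a, b⟩, rfl⟩
    exact ⟨a, a.2, b, rfl⟩
  · rintro ⟨a, ha, b, rfl⟩
    exact ⟨(⟨a, ha⟩, b), rfl⟩

variable {A B φ}

lemma encode_injective (hφ : Function.Injective φ) : Function.Injective (encode A B φ) := by
  rintro ⟨a, b⟩ ⟨a', b'⟩ h
  simp only [encode_apply, Prod.mk.injEq] at h
  obtain rfl : b = b' := hφ h.2
  obtain rfl : a = a' := Subtype.ext (add_right_cancel h.1)
  rfl

lemma card_code (hφ : Function.Injective φ) : Nat.card (code A B φ) = Nat.card A * Nat.card B :=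
  (Nat.card_congr (AddMonoidHom.ofInjective (encode_injective hφ)).toEquiv).symm.trans
    (Nat.card_prod A B)

lemma le_wt_of_mem_code {ι κ F : Type*} [Fintype ι] [Fintype κ] [AddCommGroup F] [DecidableEq F]
    {A B : AddSubgroup (ι → F)} {φ : B →+ (κ → F)} {d₁ d₂ δ : ℕ}
    (hd₂ : ∀ a ∈ A, a ≠ 0 → d₂ ≤ wt a)
    (hd₁ : ∀ a ∈ A, ∀ b : B, (b : ι → F) ≠ 0 → d₁ ≤ wt (a + (b : ι → F)))
    (hδ : ∀ b : B, (b : ι → F) ≠ 0 → δ ≤ wt (φ b))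
    {x : (ι → F) × (κ → F)} (hx : x ∈ code A B φ) (hx0 : x ≠ 0) :
    min (δ + d₁) d₂ ≤ wt x.1 + wt x.2 := by
  obtain ⟨⟨a, b⟩, rfl⟩ := hx
  by_cases hb : (b : ι → F) = 0
  · obtain rfl : b = 0 := Subtype.ext hb
    have ha : (a : ι → F) ≠ 0 := fun ha => hx0 (by simp [ha])
    calc min (δ + d₁) d₂ ≤ d₂ := min_le_right _ _
      _ ≤ wt (a : ι → F) := hd₂ a a.2 ha
      _ = wt (encode A B φ (a, 0)).1 + wt (encode A B φ (a, 0)).2 := by simp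
  · calc min (δ + d₁) d₂ ≤ δ + d₁ := min_le_left _ _
      _ ≤ wt (φ b) + wt ((a : ι → F) + (b : ι → F)) := add_le_add (hδ b hb) (hd₁ a a.2 b hb)
      _ = wt (encode A B φ (a, b)).1 + wt (encode A B φ (a, b)).2 := add_comm _ _

end ConstructionX

open ConstructionX in
theorem stmt8_general (n l d1 d2 δ : ℕ)
    (F : Type*) [Field F] [DecidableEq F]
    (Cs1 Cs2 : AddSubgroup (Fin n → F))
    (hd2 : ∀ c ∈ Cs1, c ≠ 0 → d2 ≤ wt c)
    (hd1 : ∀ c1 ∈ Cs1, ∀ c2 : Cs2, (c2 : Fin n → F) ≠ 0 → d1 ≤ wt (c1 + (c2 : Fin n → F)))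
    (φ : Cs2 →+ (Fin l → F))
    (hinj : Function.Injective φ)
    (hδ : ∀ c2 : Cs2, (c2 : Fin n → F) ≠ 0 → δ ≤ wt (φ c2))
    (S : Set ((Fin n → F) × (Fin l → F)))
    (hS : S = {x | ∃ c1 ∈ Cs1, ∃ c2 : Cs2, x = (c1 + (c2 : Fin n → F), φ c2)}) :
    (0 ∈ S ∧ ∀ x ∈ S, ∀ y ∈ S, x + y ∈ S) ∧
    Nat.card S = Nat.card Cs1 * Nat.card Cs2 ∧
    (∀ x ∈ S, x ≠ 0 → min (δ + d1) d2 ≤ wt x.1 + wt x.2) := by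
  rw [← coe_code] at hS
  subst hS
  exact ⟨⟨zero_mem _, fun _ hx _ hy => add_mem hx hy⟩, card_code hinj,
    fun _ hx hx0 => le_wt_of_mem_code hd2 hd1 hδ hx hx0⟩

/-- Additive Construction X: combining two disjoint F_2-subcodes of an additive code
with an auxiliary additive code of length l. -/
theorem stmt8 (n l d1 d2 δ : ℕ)
    (F : Type*) [Field F] [Fintype F] [DecidableEq F] (hF : Fintype.card F = 4)
    (Cs1 Cs2 : AddSubgroup (Fin n → F))
    (hdisj : Cs1 ⊓ Cs2 = ⊥)
    (hd2 : ∀ c ∈ Cs1, c ≠ 0 → d2 ≤ wt c)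
    (hd1 : ∀ c1 ∈ Cs1, ∀ c2 : Cs2, (c2 : Fin n → F) ≠ 0 → d1 ≤ wt (c1 + (c2 : Fin n → F)))
    (φ : Cs2 →+ (Fin l → F))
    (hinj : Function.Injective φ)
    (hδ : ∀ c2 : Cs2, (c2 : Fin n → F) ≠ 0 → δ ≤ wt (φ c2))
    (S : Set ((Fin n → F) × (Fin l → F)))
    (hS : S = {x | ∃ c1 ∈ Cs1, ∃ c2 : Cs2, x = (c1 + (c2 : Fin n → F), φ c2)}) :
    (0 ∈ S ∧ ∀ x ∈ S, ∀ y ∈ S, x + y ∈ S) ∧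
    Nat.card S = Nat.card Cs1 * Nat.card Cs2 ∧
    (∀ x ∈ S, x ≠ 0 → min (δ + d1) d2 ≤ wt x.1 + wt x.2) :=
  stmt8_general n l d1 d2 δ F Cs1 Cs2 hd2 hd1 φ hinj hδ S hS
end

section
/- Let k ≥ 3. Suppose C is a quaternary additive code of length 2^k − 1 and size 2^k all of whose nonzero codewords c satisfy w_1(c) = w_w(c) = w_{w^2}(c) = 2^{k-2} (an ASEP code of parameters [2^k−1, k/2, 3·2^{k-2}]_4). Let C' be the code of length 2^k − 1 spanned over F_2 by C together with the two all-constant vectors (1,1,…,1) and (w,w,…,w). Then C' has 2^{k+2} elements and minimum Hamming distance 3·2^{k-2} − 1, and its weight distribution is 1 + (2^{k+2} − 2^k − 3)·z^{3·2^{k-2}−1} + (2^k − 1)·z^{3·2^{k-2}} + 3·z^{2^k−1}. -/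
/-- Number of coordinates of `v` equal to `α`. -/
def cnt {ι F : Type*} [Fintype ι] [DecidableEq F] (v : ι → F) (α : F) : ℕ :=
  (Finset.univ.filter fun i => v i = α).card

open Finset

section Weight

variable {ι F : Type*} [Fintype ι] [DecidableEq F]

theorem wt_eq_card_sub_cnt_zero [Zero F] (v : ι → F) : wt v = Fintype.card ι - cnt v 0 := by
  have := card_filter_add_card_filter_not (s := univ) fun i => v i = 0
  rw [wt, cnt, ← card_univ]
  simp only [ne_eq]
  omega

theorem wt_const [Zero F] {x : F} (hx : x ≠ 0) : wt (Function.const ι x) = Fintype.card ι := by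
  simp [wt, hx]

theorem wt_add_const [AddGroup F] (v : ι → F) (x : F) :
    wt (v + Function.const ι x) = Fintype.card ι - cnt v (-x) := by
  simp only [wt_eq_card_sub_cnt_zero, cnt, Pi.add_apply, Function.const_apply,
    add_eq_zero_iff_eq_neg]

theorem wt_eq_sum_cnt [Zero F] [Fintype F] (v : ι → F) :
    wt v = ∑ α ∈ univ.erase 0, cnt v α := by
  rw [wt, card_eq_sum_card_fiberwise (f := v) (t := univ.erase 0) fun i hi => by simpa using hi]
  refine sum_congr rfl fun α hα => ?_
  rw [cnt, filter_filter]
  congr 1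
  ext i
  simp only [mem_filter, mem_univ, true_and, and_iff_right_iff_imp]
  rintro rfl
  exact ne_of_mem_erase hα

theorem wt_eq_of_cnt_eq [Zero F] [Fintype F] {v : ι → F} {m : ℕ}
    (h : ∀ α ≠ 0, cnt v α = m) : wt v = (Fintype.card F - 1) * m := by
  rw [wt_eq_sum_cnt, sum_congr rfl fun α hα => h α (ne_of_mem_erase hα), sum_const,
    card_erase_of_mem (mem_univ _), card_univ, smul_eq_mul]

theorem wt_add_const_of_cnt_eq [AddGroup F] {v : ι → F} {m : ℕ}
    (h : ∀ α ≠ 0, cnt v α = m) {x : F} (hx : x ≠ 0) :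
    wt (v + Function.const ι x) = Fintype.card ι - m := by
  rw [wt_add_const, h _ (neg_ne_zero.mpr hx)]

end Weight

namespace AddSubgroup

variable {ι F : Type*}

theorem closure_image_const_eq_range [AddGroup F] {s : Set F} (hs : closure s = ⊤) :
    closure (Function.const ι '' s) = (Pi.constAddMonoidHom ι F).range := by
  rw [AddMonoidHom.range_eq_map, ← hs, AddMonoidHom.map_closure]
  rfl

def extendByConstants [AddGroup F] (C : AddSubgroup (ι → F)) : AddSubgroup (ι → F) :=
  C ⊔ (Pi.constAddMonoidHom ι F).range

theorem mem_extendByConstants_iff [AddCommGroup F] {C : AddSubgroup (ι → F)} {v : ι → F} :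
    v ∈ C.extendByConstants ↔ ∃ c ∈ C, ∃ x, c + Function.const ι x = v := by
  simp only [extendByConstants, mem_sup, AddMonoidHom.mem_range, exists_exists_eq_and]
  rfl

end AddSubgroup

open AddSubgroup

/-- Additive symbol equal probability. -/
def IsASEP {ι F : Type*} [Fintype ι] [AddGroup F] [DecidableEq F] (C : AddSubgroup (ι → F))
    (m : ℕ) : Prop :=
  ∀ c ∈ C, c ≠ 0 → ∀ α ≠ 0, cnt c α = m

theorem Nat.sub_one_mul_add_eq_of_add_one_eq {n q m : ℕ} (hn : n + 1 = q * m) :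
    (q - 1) * m + m = n + 1 := by
  obtain _ | q := q
  · simp at hn
  · rw [Nat.add_sub_cancel, hn, add_one_mul]

namespace IsASEP

variable {ι F : Type*} [Fintype ι] [AddCommGroup F] [Fintype F] [DecidableEq F]
  {C : AddSubgroup (ι → F)} {m : ℕ}

theorem wt_add_const_eq (hC : IsASEP C m) {c : ι → F} (hc : c ∈ C) (x : F) :
    wt (c + Function.const ι x) =
      if c = 0 then (if x = 0 then 0 else Fintype.card ι)
      else if x = 0 then (Fintype.card F - 1) * m else Fintype.card ι - m := by
  split_ifs with hc0 hx hx
  · simp [hc0, hx, wt]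
  · rw [hc0, zero_add, wt_const hx]
  · rw [hx, Function.const_zero, add_zero, wt_eq_of_cnt_eq (hC c hc hc0)]
  · exact wt_add_const_of_cnt_eq (hC c hc hc0) hx

theorem const_mem_iff [Nonempty ι] (hC : IsASEP C m)
    (hm : (Fintype.card F - 1) * m ≠ Fintype.card ι) {x : F} :
    Function.const ι x ∈ C ↔ x = 0 := by
  refine ⟨fun hx => by_contra fun hx0 => hm ?_, fun hx => by simp [hx, zero_mem]⟩
  rw [← wt_const (ι := ι) hx0,
    wt_eq_of_cnt_eq (hC _ hx (Function.const_ne_zero.mpr hx0))]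

theorem injOn_add_const [Nonempty ι] (hC : IsASEP C m)
    (hm : (Fintype.card F - 1) * m ≠ Fintype.card ι) :
    Set.InjOn (fun p : (ι → F) × F => p.1 + Function.const ι p.2) (C ×ˢ Set.univ) := by
  rintro ⟨c, x⟩ ⟨hc, -⟩ ⟨c', x'⟩ ⟨hc', -⟩ h
  have hconst : Function.const ι (x - x') = c' - c := by
    funext i
    rw [Pi.sub_apply, Function.const_apply, sub_eq_sub_iff_add_eq_add, add_comm]
    exact congrFun h i
  have hx : x = x' := sub_eq_zero.mp ((hC.const_mem_iff hm).mp (hconst ▸ sub_mem hc' hc))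
  subst hx
  exact Prod.ext (add_right_cancel h) rfl

theorem ncard_setOf_mem_extendByConstants [Nonempty ι] (hC : IsASEP C m)
    (hm : (Fintype.card F - 1) * m ≠ Fintype.card ι) {P : (ι → F) → Prop}
    {A : Set (ι → F)} {B : Set F} (hA : A ⊆ C)
    (hP : ∀ c ∈ C, ∀ x, P (c + Function.const ι x) ↔ c ∈ A ∧ x ∈ B) :
    {v | v ∈ C.extendByConstants ∧ P v}.ncard = A.ncard * B.ncard := by
  have himage : {v | v ∈ C.extendByConstants ∧ P v} =
      (fun p : (ι → F) × F => p.1 + Function.const ι p.2) '' A ×ˢ B := by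
    ext v
    simp only [Set.mem_ofPred_eq, mem_extendByConstants_iff, Set.mem_image, Set.mem_prod,
      Prod.exists]
    constructor
    · rintro ⟨⟨c, hc, x, rfl⟩, hPv⟩
      exact ⟨c, x, (hP c hc x).mp hPv, rfl⟩
    · rintro ⟨c, x, hcx, rfl⟩
      exact ⟨⟨c, hA hcx.1, x, rfl⟩, (hP c (hA hcx.1) x).mpr hcx⟩
  rw [himage, Set.InjOn.ncard_image, Set.ncard_prod]
  exact (hC.injOn_add_const hm).mono (Set.prod_mono hA (Set.subset_univ B))

-- `hn` below says that `0` occurs `m - 1` times in every nonzero codeword.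

theorem card_extendByConstants [Nonempty ι] (hC : IsASEP C m)
    (hn : Fintype.card ι + 1 = Fintype.card F * m) (hm : 2 ≤ m) :
    Nat.card C.extendByConstants = Nat.card C * Fintype.card F := by
  have hsum := Nat.sub_one_mul_add_eq_of_add_one_eq hn
  convert hC.ncard_setOf_mem_extendByConstants (by omega) (P := fun _ => True) (A := C)
    (B := Set.univ) subset_rfl (by simp) using 1
  · simp only [and_true]
    exact Nat.card_coe_set_eq _
  · rw [Set.ncard_univ, Nat.card_eq_fintype_card (α := F), ← Nat.card_coe_set_eq,
      SetLike.coe_sort_coe]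

theorem sub_one_le_wt [Nonempty ι] (hC : IsASEP C m)
    (hn : Fintype.card ι + 1 = Fintype.card F * m) (hm : 2 ≤ m) {v : ι → F}
    (hv : v ∈ C.extendByConstants) (hv0 : v ≠ 0) :
    (Fintype.card F - 1) * m - 1 ≤ wt v := by
  have hsum := Nat.sub_one_mul_add_eq_of_add_one_eq hn
  obtain ⟨c, hc, x, rfl⟩ := mem_extendByConstants_iff.mp hv
  rw [hC.wt_add_const_eq hc x]
  split_ifs with hc0 hx0 <;> [simp [hc0, hx0] at hv0; omega; omega; omega]

theorem ncard_wt_eq_sub_one [Nonempty ι] [Nontrivial F] (hC : IsASEP C m)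
    (hn : Fintype.card ι + 1 = Fintype.card F * m) (hm : 2 ≤ m) :
    {v | v ∈ C.extendByConstants ∧ wt v = (Fintype.card F - 1) * m - 1}.ncard =
      (Nat.card C - 1) * (Fintype.card F - 1) := by
  have hsum := Nat.sub_one_mul_add_eq_of_add_one_eq hn
  have hr : m ≤ (Fintype.card F - 1) * m :=
    Nat.le_mul_of_pos_left m (Nat.sub_pos_of_lt Fintype.one_lt_card)
  rw [hC.ncard_setOf_mem_extendByConstants (by omega) Set.sdiff_subset (B := {0}ᶜ),
    Set.ncard_sdiff_singleton_of_mem (zero_mem C), Set.ncard_compl, Set.ncard_singleton,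
    Nat.card_eq_fintype_card (α := F), ← Nat.card_coe_set_eq, SetLike.coe_sort_coe]
  intro c hc x
  rw [hC.wt_add_const_eq hc x]
  generalize (Fintype.card F - 1) * m = r at hsum hr ⊢
  by_cases hc0 : c = 0 <;> by_cases hx0 : x = 0 <;> simp [hc, hc0, hx0] <;> omega

theorem ncard_wt_eq [Nonempty ι] [Nontrivial F] (hC : IsASEP C m)
    (hn : Fintype.card ι + 1 = Fintype.card F * m) (hm : 2 ≤ m) :
    {v | v ∈ C.extendByConstants ∧ wt v = (Fintype.card F - 1) * m}.ncard = Nat.card C - 1 := by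
  have hsum := Nat.sub_one_mul_add_eq_of_add_one_eq hn
  have hr : m ≤ (Fintype.card F - 1) * m :=
    Nat.le_mul_of_pos_left m (Nat.sub_pos_of_lt Fintype.one_lt_card)
  rw [hC.ncard_setOf_mem_extendByConstants (by omega) Set.sdiff_subset (B := {0}),
    Set.ncard_sdiff_singleton_of_mem (zero_mem C), Set.ncard_singleton, mul_one,
    ← Nat.card_coe_set_eq, SetLike.coe_sort_coe]
  intro c hc x
  rw [hC.wt_add_const_eq hc x]
  generalize (Fintype.card F - 1) * m = r at hsum hr ⊢
  by_cases hc0 : c = 0 <;> by_cases hx0 : x = 0 <;> simp [hc, hc0, hx0] <;> omega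

theorem ncard_wt_eq_card [Nonempty ι] (hC : IsASEP C m)
    (hn : Fintype.card ι + 1 = Fintype.card F * m) (hm : 2 ≤ m) :
    {v | v ∈ C.extendByConstants ∧ wt v = Fintype.card ι}.ncard = Fintype.card F - 1 := by
  have hsum := Nat.sub_one_mul_add_eq_of_add_one_eq hn
  rw [hC.ncard_setOf_mem_extendByConstants (by omega)
      (Set.singleton_subset_iff.mpr (zero_mem C)) (B := {0}ᶜ),
    Set.ncard_singleton, one_mul, Set.ncard_compl, Set.ncard_singleton,
    Nat.card_eq_fintype_card]
  intro c hc x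
  rw [hC.wt_add_const_eq hc x]
  generalize (Fintype.card F - 1) * m = r at hsum ⊢
  by_cases hc0 : c = 0 <;> by_cases hx0 : x = 0 <;> simp [hc0, hx0] <;> omega

end IsASEP

section QuaternaryField

variable {F : Type*} [Field F] [Fintype F] {w : F}

theorem eq_zero_or_one_or_w_or_w_sq (hF : Fintype.card F = 4) (hw : w ^ 2 + w + 1 = 0) (x : F) :
    x = 0 ∨ x = 1 ∨ x = w ∨ x = w ^ 2 := by
  have hx4 : x ^ 4 = x := hF ▸ FiniteField.pow_card x
  -- `X (X - 1) (X - w) (X - w²) = X⁴ - X` modulo `w² + w + 1`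
  have : x * (x - 1) * (x - w) * (x - w ^ 2) = 0 := by
    linear_combination x * (x - 1) * (w - 1 - x) * hw + hx4
  simpa only [mul_eq_zero, sub_eq_zero, or_assoc] using this

theorem closure_one_w_eq_top (hF : Fintype.card F = 4) (hw : w ^ 2 + w + 1 = 0) :
    AddSubgroup.closure ({1, w} : Set F) = ⊤ := by
  refine eq_top_iff.mpr fun x _ => ?_
  have h1 : (1 : F) ∈ AddSubgroup.closure {1, w} := AddSubgroup.subset_closure (by simp)
  have hw' : w ∈ AddSubgroup.closure {1, w} := AddSubgroup.subset_closure (by simp)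
  rcases eq_zero_or_one_or_w_or_w_sq hF hw x with rfl | rfl | rfl | rfl
  · exact zero_mem _
  · exact h1
  · exact hw'
  · rw [show w ^ 2 = -(1 + w) by linear_combination hw]
    exact neg_mem (add_mem h1 hw')

end QuaternaryField

theorem stmt12 (k : ℕ) (hk : 3 ≤ k)
    (F : Type*) [Field F] [Fintype F] [DecidableEq F]
    (hF : Fintype.card F = 4) (w : F) (hw : w ^ 2 + w + 1 = 0)
    (C : AddSubgroup (Fin (2 ^ k - 1) → F))
    (hcard : Nat.card C = 2 ^ k)
    (hasep : ∀ c ∈ C, c ≠ 0 →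
      cnt c 1 = 2 ^ (k - 2) ∧ cnt c w = 2 ^ (k - 2) ∧ cnt c (w ^ 2) = 2 ^ (k - 2))
    (C' : AddSubgroup (Fin (2 ^ k - 1) → F))
    (hC' : C' = C ⊔ AddSubgroup.closure
      ({fun _ => (1 : F), fun _ => w} : Set (Fin (2 ^ k - 1) → F))) :
    Nat.card C' = 2 ^ (k + 2) ∧
    (∀ c ∈ C', c ≠ 0 → 3 * 2 ^ (k - 2) - 1 ≤ wt c) ∧
    Set.ncard {c | c ∈ C' ∧ wt c = 3 * 2 ^ (k - 2) - 1} = 2 ^ (k + 2) - 2 ^ k - 3 ∧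
    Set.ncard {c | c ∈ C' ∧ wt c = 3 * 2 ^ (k - 2)} = 2 ^ k - 1 ∧
    Set.ncard {c | c ∈ C' ∧ wt c = 2 ^ k - 1} = 3 := by
  obtain ⟨m, hm_def⟩ : ∃ m, m = 2 ^ (k - 2) := ⟨_, rfl⟩
  rw [← hm_def] at hasep ⊢
  have h4m : 2 ^ k = 4 * m := by
    rw [hm_def, show k = 2 + (k - 2) by omega, pow_add]
    norm_num
  have hm : 2 ≤ m := hm_def ▸ Nat.one_lt_two_pow (by omega)
  have hn : Fintype.card (Fin (2 ^ k - 1)) + 1 = Fintype.card F * m := by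
    rw [Fintype.card_fin, hF]
    omega
  have hASEP : IsASEP C m := fun c hc hc0 α hα => by
    obtain ⟨h1, hw1, hw2⟩ := hasep c hc hc0
    rcases eq_zero_or_one_or_w_or_w_sq hF hw α with rfl | rfl | rfl | rfl
    exacts [absurd rfl hα, h1, hw1, hw2]
  have hK : C ⊔ closure {fun _ => (1 : F), fun _ => w} = C.extendByConstants := by
    rw [extendByConstants, ← closure_image_const_eq_range (closure_one_w_eq_top hF hw),
      Set.image_pair]
    rfl
  have : Nonempty (Fin (2 ^ k - 1)) := ⟨⟨0, by omega⟩⟩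
  have hdist := hASEP.ncard_wt_eq_sub_one hn hm
  have hfull := hASEP.ncard_wt_eq_card hn hm
  rw [hF, hcard] at hdist
  rw [hF, Fintype.card_fin] at hfull
  subst hC'
  rw [hK]
  refine ⟨?_, fun v hv hv0 => ?_, ?_, ?_, hfull⟩
  · rw [hASEP.card_extendByConstants hn hm, hcard, hF, pow_add]
    rfl
  · simpa [hF] using hASEP.sub_one_le_wt hn hm hv hv0
  · rw [pow_add]
    convert hdist using 1
    omega
  · simpa [hF, hcard] using hASEP.ncard_wt_eq hn hm
end

section
/- Let k ≥ 3 and let C be an ASEP quaternary additive code with parameters [2^k − 1, k/2, 3·2^{k-2}]_4 (every nonzero codeword has exactly 2^{k-2} coordinates equal to each of 1, w, w^2). Append one extension coordinate to the F_2-span of C, (1,…,1), and (w,…,w) so that the resulting code C'' of length 2^k contains the extended constant vectors (1,…,1,1), (w,…,w,w), (w^2,…,w^2,w^2) and the codewords of C extended by 0. Then C'' is a two-weight additive code of length 2^k, size 2^{k+2}, minimum distance 3·2^{k-2}, with weight distribution 1 + (2^{k+2} − 4)·z^{3·2^{k-2}} + 3·z^{2^k}. -/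
/-- Hamming weight of a word of length 2^k viewed as a word of length 2^k - 1
together with one extension coordinate. -/
def wtExt {n : ℕ} {F : Type*} [Zero F] [DecidableEq F] (p : (Fin n → F) × F) : ℕ :=
  wt p.1 + (if p.2 = 0 then 0 else 1)

theorem stmt13 (k : ℕ) (hk : 3 ≤ k)
    (F : Type*) [Field F] [Fintype F] [DecidableEq F]
    (hF : Fintype.card F = 4) (w : F) (hw : w ^ 2 + w + 1 = 0)
    (C : AddSubgroup (Fin (2 ^ k - 1) → F))
    (hcard : Nat.card C = 2 ^ k)
    (hasep : ∀ c ∈ C, c ≠ 0 →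
      cnt c 1 = 2 ^ (k - 2) ∧ cnt c w = 2 ^ (k - 2) ∧ cnt c (w ^ 2) = 2 ^ (k - 2))
    (C'' : Set ((Fin (2 ^ k - 1) → F) × F))
    (hC'' : C'' = {p | ∃ c ∈ C, ∃ β : F, p = (c + fun _ => β, β)}) :
    (0 ∈ C'' ∧ ∀ p ∈ C'', ∀ q ∈ C'', p + q ∈ C'') ∧
    Nat.card C'' = 2 ^ (k + 2) ∧
    (∀ p ∈ C'', p ≠ 0 → 3 * 2 ^ (k - 2) ≤ wtExt p) ∧
    Set.ncard {p | p ∈ C'' ∧ wtExt p = 3 * 2 ^ (k - 2)} = 2 ^ (k + 2) - 4 ∧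
    Set.ncard {p | p ∈ C'' ∧ wtExt p = 2 ^ k} = 3 := by
  -- numeric facts
  have hkk : k - 2 + 2 = k := by omega
  have h4k : 2 ^ k = 4 * 2 ^ (k - 2) := by
    conv_lhs => rw [← hkk]
    ring
  have h1k : 1 ≤ 2 ^ (k - 2) := Nat.one_le_two_pow
  have hn : 1 ≤ 2 ^ k := Nat.one_le_two_pow
  -- characteristic 2
  have h2 : (2 : F) = 0 := by
    have h := FiniteField.cast_card_eq_zero F
    rw [hF] at h
    have h4 : (2 : F) * 2 = 0 := by norm_num at h ⊢; exact h
    rcases mul_eq_zero.mp h4 with h | h <;> exact h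
  have char2 : ∀ x : F, x + x = 0 := by
    intro x
    have : x + x = 2 * x := by ring
    rw [this, h2, zero_mul]
  have hneg : ∀ x : F, -x = x := by
    intro x; exact neg_eq_of_add_eq_zero_left (char2 x)
  -- the elements of F
  have hw0 : w ≠ 0 := by
    intro h; rw [h] at hw; simp at hw
  have hw1 : w ≠ 1 := by
    intro h; rw [h] at hw; simp at hw
    have := char2 (1 : F)
    rw [show (1:F)+1+1 = (1+1)+1 by ring, this, zero_add] at hw
    exact one_ne_zero hw
  have hw20 : w ^ 2 ≠ 0 := pow_ne_zero 2 hw0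
  have hw21 : w ^ 2 ≠ 1 := by
    intro h; rw [h] at hw
    have : w = 0 := by
      have h11 := char2 (1 : F)
      calc w = 1 + w + 1 - (1 + 1) := by ring
        _ = 0 := by rw [hw, h11]; ring
    exact hw0 this
  have hw2w : w ^ 2 ≠ w := by
    intro h; rw [h] at hw
    rw [char2 w, zero_add] at hw
    exact one_ne_zero hw
  have hall : ∀ x : F, x = 0 ∨ x = 1 ∨ x = w ∨ x = w ^ 2 := by
    have h0m : (0:F) ∉ ({1, w, w ^ 2} : Finset F) := by
      simp only [Finset.mem_insert, Finset.mem_singleton]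
      push_neg
      exact ⟨fun h => one_ne_zero h.symm, fun h => hw0 h.symm, fun h => hw20 h.symm⟩
    have h1m : (1:F) ∉ ({w, w ^ 2} : Finset F) := by
      simp only [Finset.mem_insert, Finset.mem_singleton]
      push_neg
      exact ⟨fun h => hw1 h.symm, fun h => hw21 h.symm⟩
    have hwm : w ∉ ({w ^ 2} : Finset F) := by
      simp only [Finset.mem_singleton]
      exact fun h => hw2w h.symm
    have hcard4 : ({0, 1, w, w ^ 2} : Finset F).card = 4 := by
      rw [Finset.card_insert_of_notMem h0m, Finset.card_insert_of_notMem h1m,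
        Finset.card_insert_of_notMem hwm, Finset.card_singleton]
    have huniv : ({0, 1, w, w ^ 2} : Finset F) = Finset.univ :=
      Finset.eq_univ_of_card _ (by rw [hcard4, hF])
    intro x
    have : x ∈ ({0, 1, w, w ^ 2} : Finset F) := huniv ▸ Finset.mem_univ x
    simpa using this
  -- cnt of nonzero value for nonzero codeword
  have hcnt : ∀ c ∈ C, c ≠ 0 → ∀ β : F, β ≠ 0 → cnt c β = 2 ^ (k - 2) := by
    intro c hc hc0 β hβ
    obtain ⟨h1, hwc, h2c⟩ := hasep c hc hc0
    rcases hall β with h | h | h | h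
    · exact absurd h hβ
    · rw [h]; exact h1
    · rw [h]; exact hwc
    · rw [h]; exact h2c
  -- weight of a nonzero codeword
  have hwtc : ∀ c ∈ C, c ≠ 0 → wt c = 3 * 2 ^ (k - 2) := by
    intro c hc hc0
    obtain ⟨h1, hwc, h2c⟩ := hasep c hc hc0
    have hsplit : (Finset.univ.filter fun i => c i ≠ 0) =
        ((Finset.univ.filter fun i => c i = 1) ∪ Finset.univ.filter fun i => c i = w) ∪
          Finset.univ.filter fun i => c i = w ^ 2 := by
      ext i
      simp only [Finset.mem_union, Finset.mem_filter, Finset.mem_univ, true_and]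
      constructor
      · intro h
        rcases hall (c i) with h' | h' | h' | h'
        · exact absurd h' h
        · exact Or.inl (Or.inl h')
        · exact Or.inl (Or.inr h')
        · exact Or.inr h'
      · rintro ((h | h) | h) <;> rw [h] <;> simp [hw0, hw20, one_ne_zero]
    have hd1 : Disjoint (Finset.univ.filter fun i => c i = 1)
        (Finset.univ.filter fun i => c i = w) := by
      rw [Finset.disjoint_left]
      intro i hi hi'
      simp only [Finset.mem_filter, Finset.mem_univ, true_and] at hi hi'
      exact hw1 (hi ▸ hi').symm
    have hd2 : Disjoint ((Finset.univ.filter fun i => c i = 1) ∪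
        Finset.univ.filter fun i => c i = w)
        (Finset.univ.filter fun i => c i = w ^ 2) := by
      rw [Finset.disjoint_left]
      intro i hi hi'
      simp only [Finset.mem_union, Finset.mem_filter, Finset.mem_univ, true_and] at hi hi'
      rcases hi with h | h
      · exact hw21 (hi' ▸ h ▸ rfl)
      · exact hw2w (hi' ▸ h ▸ rfl)
    rw [wt, hsplit, Finset.card_union_of_disjoint hd2, Finset.card_union_of_disjoint hd1]
    rw [show ((Finset.univ.filter fun i => c i = 1)).card = cnt c 1 from rfl,
      show ((Finset.univ.filter fun i => c i = w)).card = cnt c w from rfl,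
      show ((Finset.univ.filter fun i => c i = w ^ 2)).card = cnt c (w ^ 2) from rfl,
      h1, hwc, h2c]
    ring
  -- weight of c + const β for β ≠ 0
  have hwtshift : ∀ c : Fin (2 ^ k - 1) → F, ∀ β : F, β ≠ 0 →
      wt (c + fun _ => β) = (2 ^ k - 1) - cnt c β := by
    intro c β hβ
    have key : ∀ x : F, x + β = 0 ↔ x = β := by
      intro x
      rw [add_eq_zero_iff_eq_neg, hneg]
    have hfe : (Finset.univ.filter fun i : Fin (2 ^ k - 1) =>
        (c + fun _ : Fin (2 ^ k - 1) => β) i ≠ 0) =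
        Finset.univ.filter fun i : Fin (2 ^ k - 1) => ¬ (c i = β) := by
      ext i
      simp only [Finset.mem_filter, Finset.mem_univ, true_and, Pi.add_apply, ne_eq, key]
    rw [wt, hfe]
    have := Finset.card_filter_add_card_filter_not (s := Finset.univ)
      (p := fun i : Fin (2 ^ k - 1) => c i = β)
    rw [Finset.card_univ, Fintype.card_fin] at this
    have hcnt' : cnt c β = (Finset.univ.filter fun i => c i = β).card := rfl
    omega
  -- wt of const β, β ≠ 0
  have hwtconst : ∀ β : F, β ≠ 0 → wt (fun _ : Fin (2 ^ k - 1) => β) = 2 ^ k - 1 := by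
    intro β hβ
    rw [wt]
    have : (Finset.univ.filter fun _ : Fin (2 ^ k - 1) => β ≠ 0) = Finset.univ := by
      apply Finset.filter_true_of_mem; intro i _; exact hβ
    rw [this, Finset.card_univ, Fintype.card_fin]
  have hwt0 : wt (0 : Fin (2 ^ k - 1) → F) = 0 := by
    rw [wt]
    apply Finset.card_eq_zero.mpr
    apply Finset.filter_false_of_mem
    intro i _
    simp
  -- main classification of weights
  have hclass : ∀ c ∈ C, ∀ β : F,
      wtExt (c + fun _ => β, β) =
        if c = 0 then (if β = 0 then 0 else 2 ^ k) else 3 * 2 ^ (k - 2) := by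
    intro c hc β
    by_cases hc0 : c = 0
    · subst hc0
      by_cases hβ : β = 0
      · subst hβ
        simp [wtExt, hwt0, show ((0 : Fin (2 ^ k - 1) → F) + fun _ => (0:F)) = 0 by
          funext i; simp]
      · rw [if_pos rfl, if_neg hβ]
        have he : ((0 : Fin (2 ^ k - 1) → F) + fun _ => β) = fun _ => β := by
          funext i; simp
        show wt ((0 : Fin (2 ^ k - 1) → F) + fun _ => β) + (if β = 0 then 0 else 1) = 2 ^ k
        rw [he, hwtconst β hβ, if_neg hβ]
        omega
    · rw [if_neg hc0]
      by_cases hβ : β = 0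
      · subst hβ
        have he : (c + fun _ : Fin (2 ^ k - 1) => (0:F)) = c := by funext i; simp
        show wt (c + fun _ : Fin (2 ^ k - 1) => (0:F)) + (if (0:F) = 0 then 0 else 1)
          = 3 * 2 ^ (k - 2)
        rw [he, hwtc c hc hc0, if_pos rfl]
        omega
      · show wt (c + fun _ : Fin (2 ^ k - 1) => β) + (if β = 0 then 0 else 1)
          = 3 * 2 ^ (k - 2)
        rw [hwtshift c β hβ, hcnt c hc hc0 β hβ, if_neg hβ]
        omega
  -- membership and injectivity of the parametrization
  set f : C × F → (Fin (2 ^ k - 1) → F) × F :=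
    fun p => (p.1.1 + fun _ => p.2, p.2) with hf
  have hfinj : Function.Injective f := by
    rintro ⟨⟨c, hc⟩, β⟩ ⟨⟨c', hc'⟩, β'⟩ h
    simp only [hf, Prod.mk.injEq] at h
    obtain ⟨h1, h2⟩ := h
    subst h2
    have : c = c' := by
      funext i
      have := congrFun h1 i
      simpa using this
    simp [this]
  have hrange : Set.range f = C'' := by
    rw [hC'']
    ext p
    constructor
    · rintro ⟨⟨⟨c, hc⟩, β⟩, rfl⟩
      exact ⟨c, hc, β, rfl⟩
    · rintro ⟨c, hc, β, rfl⟩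
      exact ⟨⟨⟨c, hc⟩, β⟩, rfl⟩
  -- zero element characterization
  have hzero : ∀ c ∈ C, ∀ β : F, ((c + fun _ => β, β) :
      (Fin (2 ^ k - 1) → F) × F) = 0 ↔ c = 0 ∧ β = 0 := by
    intro c hc β
    constructor
    · intro h
      have hβ : β = 0 := congrArg Prod.snd h
      subst hβ
      have h1 : c + (fun _ : Fin (2 ^ k - 1) => (0:F)) = 0 := congrArg Prod.fst h
      constructor
      · funext i
        have := congrFun h1 i
        simpa using this
      · rfl
    · rintro ⟨rfl, rfl⟩
      have he : ((0 : Fin (2 ^ k - 1) → F) + fun _ => (0:F)) = 0 := by funext i; simp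
      exact congrArg (fun v => ((v, (0:F)) : (Fin (2 ^ k - 1) → F) × F)) he
  -- membership of the constant vectors
  have hconstmem : ∀ β : F, ((fun _ => β, β) : (Fin (2 ^ k - 1) → F) × F) ∈ C'' := by
    intro β
    rw [hC'']
    refine ⟨0, C.zero_mem, β, ?_⟩
    have he : ((0 : Fin (2 ^ k - 1) → F) + fun _ => β) = fun _ => β := by funext i; simp
    rw [he]
  have hwtconstExt : ∀ β : F, β ≠ 0 →
      wtExt ((fun _ => β, β) : (Fin (2 ^ k - 1) → F) × F) = 2 ^ k := by
    intro β hβ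
    rw [wtExt, hwtconst β hβ]
    simp only [if_neg hβ]
    omega
  have hwtExt0 : wtExt (0 : (Fin (2 ^ k - 1) → F) × F) = 0 := by
    rw [wtExt]
    simp [hwt0]
  -- goal 1: subgroup facts
  have hzmem : (0 : (Fin (2 ^ k - 1) → F) × F) ∈ C'' := by
    rw [hC'']
    show ∃ c ∈ C, ∃ β : F, (0 : (Fin (2 ^ k - 1) → F) × F) = (c + fun _ => β, β)
    refine ⟨0, C.zero_mem, 0, ?_⟩
    have he : ((0 : Fin (2 ^ k - 1) → F) + fun _ => (0:F)) = 0 := by funext i; simp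
    rw [he]
    rfl
  have hadd : ∀ p ∈ C'', ∀ q ∈ C'', p + q ∈ C'' := by
    rw [hC'']
    rintro p ⟨c, hc, β, rfl⟩ q ⟨c', hc', β', rfl⟩
    show ∃ a ∈ C, ∃ γ : F,
      ((c + fun _ => β, β) : (Fin (2 ^ k - 1) → F) × F) + (c' + fun _ => β', β')
        = (a + fun _ => γ, γ)
    refine ⟨c + c', C.add_mem hc hc', β + β', ?_⟩
    have he : (c + fun _ : Fin (2 ^ k - 1) => β) + (c' + fun _ => β') =
        (c + c') + fun _ => β + β' := by
      funext i
      simp only [Pi.add_apply]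
      ring
    rw [Prod.mk_add_mk, he]
  -- cardinality of C''
  have hcardC'' : Nat.card C'' = 2 ^ (k + 2) := by
    rw [← hrange, Nat.card_range_of_injective hfinj, Nat.card_prod, hcard,
      Nat.card_eq_fintype_card, hF]
    ring
  -- classification of elements of C''
  have hclass' : ∀ p ∈ C'', p = 0 ∨ wtExt p = 3 * 2 ^ (k - 2) ∨
      (wtExt p = 2 ^ k ∧ ∃ β : F, β ≠ 0 ∧ p = ((fun _ => β), β)) := by
    rw [hC'']
    rintro p ⟨c, hc, β, rfl⟩
    by_cases hc0 : c = 0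
    · by_cases hβ : β = 0
      · left; exact (hzero c hc β).mpr ⟨hc0, hβ⟩
      · right; right
        subst hc0
        have he : ((0 : Fin (2 ^ k - 1) → F) + fun _ => β) = fun _ => β := by
          funext i; simp
        rw [he]
        exact ⟨hwtconstExt β hβ, β, hβ, rfl⟩
    · right; left
      rw [hclass c hc β, if_neg hc0]
  -- goal: minimum distance
  have hmin : ∀ p ∈ C'', p ≠ 0 → 3 * 2 ^ (k - 2) ≤ wtExt p := by
    intro p hp hp0
    rcases hclass' p hp with h | h | ⟨h, _⟩
    · exact absurd h hp0
    · omega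
    · omega
  -- the weight-2^k set
  have hAset : {p | p ∈ C'' ∧ wtExt p = 2 ^ k} =
      {((fun _ => 1), 1), ((fun _ => w), w), ((fun _ => w ^ 2), w ^ 2)} := by
    ext p
    simp only [Set.mem_setOf_eq, Set.mem_insert_iff, Set.mem_singleton_iff]
    constructor
    · rintro ⟨hp, hwp⟩
      rcases hclass' p hp with h | h | ⟨h, β, hβ, rfl⟩
      · rw [h, hwtExt0] at hwp; omega
      · rw [h] at hwp; omega
      · rcases hall β with h' | h' | h' | h'
        · exact absurd h' hβ
        · subst h'; left; rfl
        · subst h'; right; left; rfl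
        · subst h'; right; right; rfl
    · rintro (rfl | rfl | rfl)
      · exact ⟨hconstmem 1, hwtconstExt 1 one_ne_zero⟩
      · exact ⟨hconstmem w, hwtconstExt w hw0⟩
      · exact ⟨hconstmem (w ^ 2), hwtconstExt (w ^ 2) hw20⟩
  have hAcard : Set.ncard {p | p ∈ C'' ∧ wtExt p = 2 ^ k} = 3 := by
    rw [hAset]
    apply Set.ncard_eq_three.mpr
    refine ⟨_, _, _, ?_, ?_, ?_, rfl⟩
    · intro h; exact hw1 (congrArg Prod.snd h).symm
    · intro h; exact hw21 (congrArg Prod.snd h).symm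
    · intro h; exact hw2w (congrArg Prod.snd h).symm
  -- the weight-3*2^(k-2) set
  have hBset : {p | p ∈ C'' ∧ wtExt p = 3 * 2 ^ (k - 2)} =
      C'' \ (insert 0 {p | p ∈ C'' ∧ wtExt p = 2 ^ k}) := by
    ext p
    simp only [Set.mem_setOf_eq, Set.mem_diff, Set.mem_insert_iff, not_or]
    constructor
    · rintro ⟨hp, hwp⟩
      refine ⟨hp, ?_, ?_⟩
      · rintro rfl
        rw [hwtExt0] at hwp; omega
      · rintro ⟨_, h⟩
        rw [h] at hwp; omega
    · rintro ⟨hp, h0, hA⟩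
      refine ⟨hp, ?_⟩
      rcases hclass' p hp with h | h | ⟨h, _⟩
      · exact absurd h h0
      · exact h
      · exact absurd ⟨hp, h⟩ hA
  have hBcard : Set.ncard {p | p ∈ C'' ∧ wtExt p = 3 * 2 ^ (k - 2)} = 2 ^ (k + 2) - 4 := by
    rw [hBset]
    have hsub : insert 0 {p | p ∈ C'' ∧ wtExt p = 2 ^ k} ⊆ C'' := by
      intro p hp
      rcases hp with rfl | ⟨hp, _⟩
      · exact hzmem
      · exact hp
    rw [Set.ncard_diff hsub (Set.toFinite _)]
    have h0A : (0 : (Fin (2 ^ k - 1) → F) × F) ∉ {p | p ∈ C'' ∧ wtExt p = 2 ^ k} := by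
      rintro ⟨_, h⟩
      rw [hwtExt0] at h; omega
    rw [Set.ncard_insert_of_notMem h0A (Set.toFinite _), hAcard,
      ← Nat.card_coe_set_eq, hcardC'']
  exact ⟨⟨hzmem, hadd⟩, hcardC'', hmin, hBcard, hAcard⟩
end

section
/- For odd k ≥ 5: g(k, 5·2^{k-2}) = 5·2^{k-1} − 2 = 3·((2^k+1)/3 + 2^{k-1} − 1), and g(k, 5·2^{k-2} + 2) = 5·2^{k-1} + k − 2 > 3·((2^k+1)/3 + 2^{k-1}), where g(m, 2d) = Σ_{i=0}^{m-1} ⌈d/2^{i-1}⌉ with the i=0 term equal to 2d. -/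
open Finset

namespace Nat

theorem ceilDiv_mul (x : ℕ) {m n : ℕ} (hm : 0 < m) (hn : 0 < n) :
    x ⌈/⌉ (m * n) = x ⌈/⌉ m ⌈/⌉ n :=
  eq_of_forall_ge_iff fun c ↦ by
    rw [ceilDiv_le_iff_le_mul (mul_pos hm hn), ceilDiv_le_iff_le_mul hn,
      ceilDiv_le_iff_le_mul hm, mul_assoc]

theorem two_mul_add_ceilDiv_two {y r : ℕ} (hr : r ≤ 1) : (2 * y + r) ⌈/⌉ 2 = y + r := by
  rw [ceilDiv_eq_add_pred_div]
  omega

end Nat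

def griesmerSum (m d : ℕ) : ℕ := ∑ j ∈ range m, d ⌈/⌉ 2 ^ j

theorem griesmerSum_succ (m x : ℕ) : griesmerSum (m + 1) x = x + griesmerSum m (x ⌈/⌉ 2) := by
  simp only [griesmerSum, sum_range_succ', pow_zero, ceilDiv_one, add_comm x, pow_succ',
    Nat.ceilDiv_mul x two_pos (Nat.two_pow_pos _)]

theorem griesmerSum_add_two_pow_mul_add (a m c : ℕ) {r : ℕ} (hr : r ≤ 1) :
    griesmerSum (a + m) (2 ^ m * c + r) + 2 * c =
      2 ^ (m + 1) * c + m * r + griesmerSum a (c + r) := by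
  induction m with
  | zero => rw [add_zero, pow_zero, one_mul, zero_mul, add_zero, zero_add, pow_one, add_comm]
  | succ m ih =>
    rw [← add_assoc, griesmerSum_succ, pow_succ', mul_assoc, Nat.two_mul_add_ceilDiv_two hr]
    simp only [pow_succ] at ih ⊢
    linarith

theorem G_succ (m d : ℕ) : G (m + 1) d = 2 * d + griesmerSum m d := by
  rw [G, sum_Ico_eq_sum_range, griesmerSum, add_tsub_cancel_right]
  simp only [add_tsub_cancel_left, Nat.ceilDiv_eq_add_pred_div]

theorem G_add_five_five_mul_two_pow_add (n : ℕ) {r : ℕ} (hr : r ≤ 1) :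
    G (n + 5) (5 * 2 ^ (n + 2) + r) = 5 * 2 ^ (n + 4) + (n + 5) * r - 2 := by
  have hsum := griesmerSum_add_two_pow_mul_add 2 (n + 2) 5 hr
  rw [show n + 5 = 2 + (n + 2) + 1 by ring, G_succ, mul_comm 5]
  have h₃ : 2 ^ (n + 2 + 1) = 2 ^ (n + 2) * 2 := pow_succ 2 _
  have h₄ : 2 ^ (n + 4) = 2 ^ (n + 2) * 4 := by ring
  interval_cases r
  · rw [show griesmerSum 2 (5 + 0) = 8 from rfl] at hsum
    omega
  · rw [show griesmerSum 2 (5 + 1) = 9 from rfl] at hsum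
    omega

theorem stmt17 (k : ℕ) (hk : 5 ≤ k) (hodd : Odd k) :
    G k (5 * 2 ^ (k - 3)) = 5 * 2 ^ (k - 1) - 2 ∧
    5 * 2 ^ (k - 1) - 2 = 3 * ((2 ^ k + 1) / 3 + 2 ^ (k - 1) - 1) ∧
    G k (5 * 2 ^ (k - 3) + 1) = 5 * 2 ^ (k - 1) + k - 2 ∧
    3 * ((2 ^ k + 1) / 3 + 2 ^ (k - 1)) < 5 * 2 ^ (k - 1) + k - 2 := by
  obtain ⟨n, rfl⟩ : ∃ n, k = n + 5 := ⟨k - 5, by omega⟩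
  obtain ⟨q, hq⟩ : 2 + 1 ∣ 2 ^ (n + 5) + 1 ^ (n + 5) := hodd.nat_add_dvd_pow_add_pow 2 1
  have hG₀ := G_add_five_five_mul_two_pow_add n zero_le_one
  have hG₁ := G_add_five_five_mul_two_pow_add n le_rfl
  have hpow : 2 ^ (n + 5) = 2 ^ (n + 4) * 2 := pow_succ 2 _
  rw [one_pow] at hq
  simp only [show n + 5 - 3 = n + 2 by omega, show n + 5 - 1 = n + 4 by omega, add_zero,
    mul_zero, mul_one] at hG₀ hG₁ ⊢
  refine ⟨hG₀, ?_, hG₁, ?_⟩ <;> omega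
end
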